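/- In the sequential candidate-set sampling scheme, the probability that a candidate with score c is included in the candidate set is monotone nondecreasing in c: if c_i ≥ c_j then P(item i appears in the sampled candidate set of size k) ≥ P(item j appears). -/

import Mathlib

/-- Probability of drawing the ordered sequence `s` of `k` distinct candidates in
the sequential sampling scheme: at each step a remaining candidate is drawn with
probability proportional to its score among the remaining candidates. -/
noncomputable def seqProb {m k : ℕ} (c : Fin m → ℝ) (s : Fin k ↪ Fin m) : ℝ :=
  ∏ j : Fin k,
    c (s j) /
      ∑ t ∈ Finset.univ.filter (fun t : Fin m => ∀ j' : Fin k, j' < j → s j' ≠ t),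
        c t

/-- Inclusion probability of candidate `i`: total probability over ordered
selections of size `k` that contain `i`. -/
noncomputable def inclProb (m k : ℕ) (c : Fin m → ℝ) (i : Fin m) : ℝ :=
  ∑ s ∈ Finset.univ.filter (fun s : Fin k ↪ Fin m => ∃ j : Fin k, s j = i),
    seqProb c s

/-!
Swapping the labels `i` and `j` maps the selections containing `j` bijectively onto those
containing `i`, and a relabelled selection has, under the scores `c`, the probability the
original one has under `c ∘ swap i j`. Hence `P(j) = P_{c ∘ swap i j}(i)`. The selections
containing both `i` and `j` are permuted by the swap, so they contribute equally to both sides.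
For a selection containing `i` but not `j`, swapping the scores lowers every numerator (as
`c j ≤ c i`) and raises every denominator, because `j` is always among the remaining candidates.
-/

open Finset Equiv

section Relabel

variable {m k : ℕ}

def relabel (σ : Perm (Fin m)) : (Fin k ↪ Fin m) ≃ (Fin k ↪ Fin m) :=
  embeddingCongr (Equiv.refl _) σ

@[simp]
lemma relabel_apply (σ : Perm (Fin m)) (s : Fin k ↪ Fin m) (t : Fin k) :
    relabel σ s t = σ (s t) := by
  simp [relabel]

lemma seqProb_relabel (c : Fin m → ℝ) (σ : Perm (Fin m)) (s : Fin k ↪ Fin m) :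
    seqProb c (relabel σ s) = seqProb (c ∘ σ) s := by
  refine prod_congr rfl fun t _ => ?_
  simp only [relabel_apply, Function.comp_apply]
  congr 1
  exact (sum_equiv σ (fun y => by simp) fun _ _ => rfl).symm

lemma inclProb_comp_perm (c : Fin m → ℝ) (σ : Perm (Fin m)) (x : Fin m) :
    inclProb m k (c ∘ σ) x = inclProb m k c (σ x) :=
  sum_equiv (relabel σ) (fun s => by simp) fun s _ => (seqProb_relabel c σ s).symm

lemma sum_seqProb_comp_perm_of_relabel_invariant (c : Fin m → ℝ) (σ : Perm (Fin m))
    {S : Finset (Fin k ↪ Fin m)} (hS : ∀ s, s ∈ S ↔ relabel σ s ∈ S) :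
    ∑ s ∈ S, seqProb (c ∘ σ) s = ∑ s ∈ S, seqProb c s :=
  sum_equiv (relabel σ) hS fun s _ => (seqProb_relabel c σ s).symm

lemma sum_le_sum_comp_swap {c : Fin m → ℝ} {i j : Fin m} (hij : c j ≤ c i)
    {A : Finset (Fin m)} (hj : j ∈ A) :
    ∑ x ∈ A, c x ≤ ∑ x ∈ A, c (swap i j x) := by
  by_cases hi : i ∈ A
  · refine (Perm.sum_comp (swap i j) A c fun x hx => ?_).ge
    rcases swap_apply_ne_self_iff.mp hx with ⟨-, rfl | rfl⟩ <;> assumption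
  · have hfix : ∀ x ∈ A.erase j, c (swap i j x) = c x := fun x hx =>
      congrArg c (swap_apply_of_ne_of_ne (ne_of_mem_of_not_mem (mem_of_mem_erase hx) hi)
        (ne_of_mem_erase hx))
    rw [← add_sum_erase A _ hj, ← add_sum_erase A _ hj, sum_congr rfl hfix, swap_apply_right]
    gcongr

lemma seqProb_comp_swap_le {c : Fin m → ℝ} (hc : ∀ t, 0 < c t) {i j : Fin m}
    (hij : c j ≤ c i) {s : Fin k ↪ Fin m} (hs : ∀ t, s t ≠ j) :
    seqProb (c ∘ swap i j) s ≤ seqProb c s := by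
  refine prod_le_prod (fun t _ => div_nonneg (hc _).le (sum_nonneg fun x _ => (hc _).le))
    fun t _ => ?_
  have hj : j ∈ univ.filter (fun x => ∀ t' : Fin k, t' < t → s t' ≠ x) := by
    simp [hs]
  have hnum : c (swap i j (s t)) ≤ c (s t) := by
    rcases eq_or_ne (s t) i with h | h
    · rwa [h, swap_apply_left]
    · rw [swap_apply_of_ne_of_ne h (hs t)]
  exact div_le_div₀ (hc _).le hnum (sum_pos (fun x _ => hc x) ⟨j, hj⟩)
    (sum_le_sum_comp_swap hij hj)

end Relabel

theorem inclusion_prob_monotone_in_score_general {m k : ℕ}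
    (c : Fin m → ℝ) (hc : ∀ t, 0 < c t) (i j : Fin m) (hij : c j ≤ c i) :
    inclProb m k c j ≤ inclProb m k c i := by
  rw [← swap_apply_left i j, ← inclProb_comp_perm]
  unfold inclProb
  rw [← sum_filter_add_sum_filter_not _ (fun s => ∃ t, s t = j),
    ← sum_filter_add_sum_filter_not _ (fun s => ∃ t, s t = j) (seqProb c)]
  refine add_le_add (sum_seqProb_comp_perm_of_relabel_invariant c _ fun s => ?_).le
    (sum_le_sum fun s hs => seqProb_comp_swap_le hc hij ?_)
  · simp [swap_apply_eq_iff, and_comm]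
  · simpa using (mem_filter.mp hs).2

/-- In the sequential candidate-set sampling scheme with positive scores, the
probability of being included in the size-`k` candidate set is monotone
nondecreasing in the candidate score: `c j ≤ c i` implies
`P(j included) ≤ P(i included)`. -/
theorem inclusion_prob_monotone_in_score {m k : ℕ} (hk : k ≤ m)
    (c : Fin m → ℝ) (hc : ∀ t, 0 < c t) (i j : Fin m) (hij : c j ≤ c i) :
    inclProb m k c j ≤ inclProb m k c i :=
  inclusion_prob_monotone_in_score_general c hc i j hij
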